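/- arXiv:2103.16541 — 6 statements merged into one kernel-verified Lean document; each statement's English description precedes it below -/
import Mathlib

section
/- In a Flow structure, two functions are equal if and only if they have the same image on every argument: for all f and g, f = g if and only if for every x, f(x) = g(x). -/
/-- In a Flow structure (F1 weak extensionality, F2 self-reference),
two functions are equal iff they have the same image on every argument. -/
theorem flow_eq_iff_images (F : Type*) (ev : F → F → F)
    (hF1 : ∀ f g : F, ((ev f g = f ∧ ev g f = g) ∨ (ev f g = g ∧ ev g f = f)) → f = g)
    (hF2 : ∀ f : F, ev f f = f) :
    ∀ f g : F, f = g ↔ ∀ x : F, ev f x = ev g x := by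
  intro f g
  constructor
  · rintro rfl x; rfl
  · intro h
    exact hF1 f g (Or.inr ⟨(h g).trans (hF2 g), ((h f).symm).trans (hF2 f)⟩)
end

section
/- In a Flow structure with F-composition, there is a unique element h such that h ≠ 0̲ and h(x) = 0̲ for every x ≠ h. (This element is denoted φ₀ and arises as the F-composition 0̲ ∘ 0̲.) -/
/-- The defining conditions of the F-composition h = f ∘ g (Definition of F-composition). -/
def FlowComp {F : Type*} (ev : F → F → F) (z o f g h : F) : Prop :=
  h ≠ z ∧
  (∀ x : F, x ≠ f → x ≠ g → x ≠ h → ev h x = ev f (ev g x)) ∧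
  (h ≠ f → ev h f = z) ∧
  (h ≠ g → ev h g = z) ∧
  (g ≠ h → f ≠ h → g ≠ o → f ≠ o → (ev f (ev g h) = z ∨ ev g h = z))

/-- There is a unique h with h ≠ 0̲ and h(x) = 0̲ for every x ≠ h. -/
theorem flow_phi0_exists_unique (F : Type*) (ev : F → F → F) (z o : F) (comp : F → F → F)
    (hF1 : ∀ f g : F, ((ev f g = f ∧ ev g f = g) ∨ (ev f g = g ∧ ev g f = f)) → f = g)
    (hF2 : ∀ f : F, ev f f = f)
    (hz : ∀ x : F, ev z x = z)
    (ho : ∀ x : F, ev o x = x)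
    (hcomp : ∀ f g : F, FlowComp ev z o f g (comp f g))
    (huniq : ∀ f g h : F, FlowComp ev z o f g h → h = comp f g) :
    ∃! h : F, h ≠ z ∧ ∀ x : F, x ≠ h → ev h x = z := by
  have key : ∀ h : F, (h ≠ z ∧ ∀ x : F, x ≠ h → ev h x = z) → h = comp z z := by
    intro h ⟨hnz, hall⟩
    apply huniq
    refine ⟨hnz, ?_, ?_, ?_, ?_⟩
    · intro x hxz _ hxh
      rw [hall x hxh, hz]
    · intro hne; exact hall z (Ne.symm hnz)
    · intro hne; exact hall z (Ne.symm hnz)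
    · intro _ _ _ _; left; exact hz _
  obtain ⟨hnz, hii, hiii, hiv, hv⟩ := hcomp z z
  refine ⟨comp z z, ⟨hnz, ?_⟩, fun h hh => key h hh⟩
  intro x hxh
  by_cases hxz : x = z
  · subst hxz; exact hiii hnz
  · rw [hii x hxz hxz hxh, hz]
end

section
/- In a Flow structure with F-composition and φ₀ defined as 0̲ ∘ 0̲, for every x one has 0̲ ∘ x = φ₀ and x ∘ 0̲ = φ₀. -/
/-- For every x, 0̲ ∘ x = φ₀ and x ∘ 0̲ = φ₀, where φ₀ = 0̲ ∘ 0̲. -/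
theorem flow_comp_with_zero (F : Type*) (ev : F → F → F) (z o : F) (comp : F → F → F)
    (hF1 : ∀ f g : F, ((ev f g = f ∧ ev g f = g) ∨ (ev f g = g ∧ ev g f = f)) → f = g)
    (hF2 : ∀ f : F, ev f f = f)
    (hz : ∀ x : F, ev z x = z)
    (ho : ∀ x : F, ev o x = x)
    (hcomp : ∀ f g : F, FlowComp ev z o f g (comp f g))
    (huniq : ∀ f g h : F, FlowComp ev z o f g h → h = comp f g) :
    ∀ x : F, comp z x = comp z z ∧ comp x z = comp z z := by
  obtain ⟨w1, w2, w3, w4, -⟩ := hcomp z z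
  have Hw : ∀ y : F, y ≠ comp z z → ev (comp z z) y = z := by
    intro y hy
    by_cases hyz : y = z
    · subst hyz; exact w3 w1
    · rw [w2 y hyz hyz hy, hz]
  have Z1 : ∀ a : F, ev a z = a → a = z := fun a ha => hF1 a z (Or.inl ⟨ha, hz a⟩)
  have L : ∀ f : F, ev f z = z := by
    intro f
    by_contra hc
    have hfz : f ≠ z := fun e => hc (by rw [e, hz])
    have hfo : f ≠ o := fun e => hc (by rw [e, ho])
    have hoz : o ≠ z := fun e => hfz (by rw [← ho f, e, hz])
    have hfw : f ≠ comp z z := fun e => hc (by rw [e, Hw z (Ne.symm w1)])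
    have how : o ≠ comp z z := fun e => hfz (by rw [← ho f, e, Hw f hfw])
    have hcf : ev f z ≠ f := fun e => hfz (Z1 f e)
    by_cases hcw : ev f z = comp z z
    · -- case c = φ₀
      obtain ⟨k1, k2, k3, k4, -⟩ := hcomp f z
      have hkzz : ev (comp f z) z = z := k4 k1
      have hkf : comp f z ≠ f := fun e => hc (by rw [← e]; exact hkzz)
      have hkvf : ev (comp f z) f = z := k3 hkf
      have hko : comp f z ≠ o := fun e => hfz (by rw [← ho f, ← e, hkvf])
      have kval : ∀ y : F, y ≠ f → y ≠ z → y ≠ comp f z → ev (comp f z) y = ev f z :=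
        fun y a b d => by rw [k2 y a b d, hz]
      have hkw : comp f z ≠ comp z z := by
        intro e
        have h1 := kval o (Ne.symm hfo) hoz (Ne.symm hko)
        rw [e, Hw o how] at h1
        exact hc h1.symm
      obtain ⟨s1, s2, s3, s4, s5⟩ := hcomp (comp z z) (comp f z)
      by_cases hsw : comp (comp z z) (comp f z) = comp z z
      · have h2 := kval o (Ne.symm hfo) hoz (Ne.symm hko)
        have h1 := s2 o how (Ne.symm hko) (fun e => how (e.trans hsw))
        rw [hsw, Hw o how, h2, hcw, hF2] at h1
        exact w1 h1.symm
      · by_cases hsk : comp (comp z z) (comp f z) = comp f z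
        · have h1 : ev (comp (comp z z) (comp f z)) (comp z z) = z := s3 hsw
          rw [hsk] at h1
          have h2 := kval (comp z z) (Ne.symm hfw) w1 (Ne.symm hkw)
          rw [h1, hcw] at h2
          exact w1 h2.symm
        · by_cases hsf : comp (comp z z) (comp f z) = f
          · have h1 := s2 z (Ne.symm w1) (Ne.symm k1) (fun e => hfz (e.trans hsf).symm)
            rw [hsf, hkzz, Hw z (Ne.symm w1)] at h1
            exact hc h1
          · have h5 := s5 (fun e => hsk e.symm) (fun e => hsw e.symm) hko (Ne.symm how)
            have h2 := kval _ hsf s1 hsk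
            rw [h2, hcw, hF2] at h5
            rcases h5 with h | h <;> exact w1 h
    · -- main case : c ≠ φ₀
      obtain ⟨m1, m2, m3, m4, -⟩ := hcomp f (comp z z)
      set m := comp f (comp z z) with hm
      have mval : ∀ y : F, y ≠ f → y ≠ comp z z → y ≠ m → ev m y = ev f z :=
        fun y a b d => by rw [m2 y a b d, Hw y b]
      have hmzz : ev m z = ev f z := mval z (Ne.symm hfz) (Ne.symm w1) (Ne.symm m1)
      have hmw : m ≠ comp z z := fun e => hc (by rw [← hmzz, e, Hw z (Ne.symm w1)])
      have hmvw : ev m (comp z z) = z := m4 hmw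
      have hmo : m ≠ o := fun e => w1 (by rw [← ho (comp z z), ← e, hmvw])
      have hcm : ev f z ≠ m := fun e => m1 (Z1 _ (by rw [hmzz, ← e]))
      by_cases hmf : m = f
      · -- config X : comp f φ₀ = f
        have rowf : ∀ y : F, y ≠ f → y ≠ comp z z → ev f y = ev f z := by
          intro y a b
          have := mval y a b (fun e => a (e.trans hmf))
          rwa [hmf] at this
        obtain ⟨k1, k2, k3, k4, -⟩ := hcomp f z
        have hkzz : ev (comp f z) z = z := k4 k1
        have hkf : comp f z ≠ f := fun e => hc (by rw [← e]; exact hkzz)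
        have hkvf : ev (comp f z) f = z := k3 hkf
        have hko : comp f z ≠ o := fun e => hfz (by rw [← ho f, ← e, hkvf])
        have kval : ∀ y : F, y ≠ f → y ≠ z → y ≠ comp f z → ev (comp f z) y = ev f z :=
          fun y a b d => by rw [k2 y a b d, hz]
        have hkw : comp f z ≠ comp z z := by
          intro e
          have h1 := kval o (Ne.symm hfo) hoz (Ne.symm hko)
          rw [e, Hw o how] at h1
          exact hc h1.symm
        obtain ⟨p1, p2, p3, p4, p5⟩ := hcomp f (comp f z)
        by_cases hpf : comp f (comp f z) = f
        · have h1 : ev (comp f (comp f z)) (comp f z) = z :=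
            p4 (fun e => hkf (e.symm.trans hpf))
          rw [hpf, rowf (comp f z) hkf hkw] at h1
          exact hc h1
        · by_cases hpk : comp f (comp f z) = comp f z
          · have h1 := p2 z (Ne.symm hfz) (Ne.symm k1) (fun e => k1 (e.trans hpk).symm)
            rw [hpk, hkzz] at h1
            exact hc h1.symm
          · have h5 := p5 (fun e => hpk e.symm) (fun e => hpf e.symm) hko hfo
            have h2 := kval _ hpf p1 hpk
            rw [h2, rowf (ev f z) hcf hcw] at h5
            rcases h5 with h | h <;> exact hc h
      · -- m ≠ f
        have hmvf : ev m f = z := m3 hmf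
        obtain ⟨n1, n2, n3, n4, -⟩ := hcomp m (comp z z)
        set n := comp m (comp z z) with hn
        have nval : ∀ y : F, y ≠ m → y ≠ comp z z → y ≠ n → ev n y = ev f z :=
          fun y a b d => by rw [n2 y a b d, Hw y b, hmzz]
        have hnzz : ev n z = ev f z := nval z (Ne.symm m1) (Ne.symm w1) (Ne.symm n1)
        have hnw : n ≠ comp z z := fun e => hc (by rw [← hnzz, e, Hw z (Ne.symm w1)])
        have hnvw : ev n (comp z z) = z := n4 hnw
        have hno : n ≠ o := fun e => w1 (by rw [← ho (comp z z), ← e, hnvw])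
        have hnm : n ≠ m := by
          intro e
          have h1 := nval f (Ne.symm hmf) hfw (fun e2 => hmf (e2.trans e).symm)
          rw [e, hmvf] at h1
          exact hc h1.symm
        have hnvm : ev n m = z := n3 hnm
        by_cases hnf : n = f
        · -- comp m φ₀ = f
          have rowf : ∀ y : F, y ≠ m → y ≠ comp z z → y ≠ f → ev f y = ev f z := by
            intro y a b d
            have := nval y a b (fun e => d (e.trans hnf))
            rwa [hnf] at this
          have hfvw : ev f (comp z z) = z := by have := hnvw; rwa [hnf] at this
          obtain ⟨p1, p2, p3, p4, p5⟩ := hcomp f m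
          by_cases hpm : comp f m = m
          · have h1 := p2 (comp z z) (Ne.symm hfw) (Ne.symm hmw)
              (fun e => hmw (e.trans hpm).symm)
            rw [hpm, hmvw] at h1
            exact hc h1.symm
          · by_cases hpf : comp f m = f
            · have h1 := p2 (comp z z) (Ne.symm hfw) (Ne.symm hmw)
                (fun e => hfw (e.trans hpf).symm)
              rw [hpf, hmvw, hfvw] at h1
              exact hc h1.symm
            · by_cases hpw : comp f m = comp z z
              · have h1 := p2 z (Ne.symm hfz) (Ne.symm m1) (fun e => w1 (e.trans hpw).symm)
                rw [hpw, Hw z (Ne.symm w1), hmzz, rowf (ev f z) hcm hcw hcf] at h1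
                exact hc h1.symm
              · have h5 := p5 (fun e => hpm e.symm) (fun e => hpf e.symm) hmo hfo
                have h2 := mval _ hpf hpw hpm
                rw [h2, rowf (ev f z) hcm hcw hcf] at h5
                rcases h5 with h | h <;> exact hc h
        · -- generic n
          have hnvf : ev n f = ev f z := nval f (Ne.symm hmf) hfw (fun e => hnf e.symm)
          obtain ⟨q1, q2, q3, q4, q5⟩ := hcomp m n
          by_cases hqm : comp m n = m
          · have h1 := q2 f (Ne.symm hmf) (fun e => hnf e.symm)
              (fun e => hmf (e.trans hqm).symm)
            rw [hqm, hnvf, hmvf, mval (ev f z) hcf hcw hcm] at h1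
            exact hc h1.symm
          · by_cases hqn : comp m n = n
            · have h1 := q2 (comp z z) (Ne.symm hmw) (Ne.symm hnw)
                (fun e => hnw (e.trans hqn).symm)
              rw [hqn, hnvw, hmzz] at h1
              exact hc h1.symm
            · by_cases hqw : comp m n = comp z z
              · have h1 := q2 z (Ne.symm m1) (Ne.symm n1) (fun e => w1 (e.trans hqw).symm)
                rw [hqw, Hw z (Ne.symm w1), hnzz, mval (ev f z) hcf hcw hcm] at h1
                exact hc h1.symm
              · have h5 := q5 (fun e => hqn e.symm) (fun e => hqm e.symm) hno hmo
                have h2 := nval _ hqm hqw hqn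
                rw [h2, mval (ev f z) hcf hcw hcm] at h5
                rcases h5 with h | h <;> exact hc h
  intro x
  constructor
  · exact (huniq z x (comp z z)
      ⟨w1, fun y _ _ hy3 => by rw [Hw y hy3, hz],
        fun _ => w3 w1, fun hne => Hw x (Ne.symm hne),
        fun _ _ _ _ => Or.inl (hz _)⟩).symm
  · exact (huniq x z (comp z z)
      ⟨w1, fun y _ _ hy3 => by rw [Hw y hy3, hz, L x],
        fun hne => Hw x (Ne.symm hne), fun _ => w3 w1,
        fun _ _ _ _ => Or.inr (hz _)⟩).symm
end

section
/- In a Flow structure with F-composition, every function maps 0̲ to 0̲: for all x, x(0̲) = 0̲. -/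
/-- Every function maps 0̲ to 0̲. -/
theorem flow_eval_zero (F : Type*) (ev : F → F → F) (z o : F) (comp : F → F → F)
    (hF1 : ∀ f g : F, ((ev f g = f ∧ ev g f = g) ∨ (ev f g = g ∧ ev g f = f)) → f = g)
    (hF2 : ∀ f : F, ev f f = f)
    (hz : ∀ x : F, ev z x = z)
    (ho : ∀ x : F, ev o x = x)
    (hcomp : ∀ f g : F, FlowComp ev z o f g (comp f g))
    (huniq : ∀ f g h : F, FlowComp ev z o f g h → h = comp f g) :
    ∀ x : F, ev x z = z := by
  intro f
  by_cases hfz : f = z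
  · rw [hfz]; exact hz z
  by_cases hfo : f = o
  · rw [hfo]; exact ho z
  by_cases hzo : z = o
  · have h1 : ev z f = z := hz f
    rw [hzo, ho] at h1
    exact absurd h1 hfo
  obtain ⟨c, hcdef⟩ : ∃ c, ev f z = c := ⟨_, rfl⟩
  rw [hcdef]
  by_contra hc
  -- φ := comp z z : the element φ₀, which sends everything (except itself) to z
  obtain ⟨p1, p2, p3, p4, p5⟩ := hcomp z z
  set φ := comp z z with hφdef
  have hzφ : z ≠ φ := Ne.symm p1
  have hφ : ∀ t, t ≠ φ → ev φ t = z := by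
    intro t ht
    by_cases htz : t = z
    · rw [htz]; exact p3 p1
    · rw [p2 t htz htz ht, hz]
  have hfφ : f ≠ φ := fun h => hc (by rw [← hcdef, h]; exact hφ z hzφ)
  have hcf : c ≠ f := fun h => hfz (hF1 f z (Or.inl ⟨by rw [hcdef]; exact h, hz f⟩))
  -- H := comp f z
  obtain ⟨q1, q2, q3, q4, q5⟩ := hcomp f z
  set H := comp f z with hHdef
  have hHz : ev H z = z := q4 q1
  have hHf : H ≠ f := fun h => hc (by rw [← hcdef, ← h]; exact hHz)
  have hHf2 : ev H f = z := q3 hHf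
  have hHgen : ∀ t, t ≠ f → t ≠ z → t ≠ H → ev H t = c := by
    intro t h1 h2 h3
    rw [q2 t h1 h2 h3, hz]; exact hcdef
  have hHo : H ≠ o := fun h => hfz (by rw [← hHf2, h, ho])
  have hHoc : ev H o = c := hHgen o (Ne.symm hfo) (Ne.symm hzo) (Ne.symm hHo)
  have hco : c ≠ o := fun h => hHo (hF1 H o (Or.inr ⟨by rw [hHoc, h], ho H⟩))
  have hφo : φ ≠ o := fun h => hfz (by rw [← hφ f hfφ, h, ho])
  have hHφ : H ≠ φ := fun h => hc (by rw [← hHoc, h]; exact hφ o (Ne.symm hφo))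
  -- c ≠ φ, via the composition comp φ H
  have hcφ : c ≠ φ := by
    intro hcphi
    obtain ⟨r1, r2, r3, r4, r5⟩ := hcomp φ H
    by_cases e1 : comp φ H = f
    · have h0 := r2 z hzφ (Ne.symm q1) (by rw [e1]; exact Ne.symm hfz)
      rw [e1, hHz, hφ z hzφ, hcdef] at h0
      exact hc h0
    by_cases e2 : comp φ H = H
    · have h0 := r3 (by rw [e2]; exact hHφ)
      rw [e2] at h0
      have h1 : ev H φ = c := hHgen φ (Ne.symm hfφ) (Ne.symm hzφ) (Ne.symm hHφ)
      rw [h1] at h0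
      exact hc h0
    by_cases e3 : comp φ H = φ
    · have h0 := r2 o (Ne.symm hφo) (Ne.symm hHo) (by rw [e3]; exact Ne.symm hφo)
      rw [e3, hφ o (Ne.symm hφo), hHoc, hcphi, hF2 φ] at h0
      exact p1 h0.symm
    · have h5 := r5 (fun h => e2 h.symm) (fun h => e3 h.symm) hHo hφo
      have hgen : ev H (comp φ H) = c := hHgen _ e1 r1 e2
      rw [hgen, hcphi, hF2 φ] at h5
      rcases h5 with h5 | h5 <;> exact p1 h5
  -- M := comp f φ
  obtain ⟨s1, s2, s3, s4, s5⟩ := hcomp f φ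
  set M := comp f φ with hMdef
  have hMz : ev M z = c := by
    rw [s2 z (Ne.symm hfz) hzφ (Ne.symm s1), hφ z hzφ]; exact hcdef
  have hMφ : M ≠ φ := fun h => hc (by rw [← hMz, h]; exact hφ z hzφ)
  have hMo : M ≠ o := fun h => hc (by rw [← hMz, h, ho])
  have hMgen : ∀ t, t ≠ f → t ≠ φ → t ≠ M → ev M t = c := by
    intro t h1 h2 h3
    rw [s2 t h1 h2 h3, hφ t h2]; exact hcdef
  have hMH : M ≠ H := fun h => hc (by rw [← hMz, h]; exact hHz)
  have hcM : c ≠ M := fun h =>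
    hc (hF1 c z (Or.inl ⟨by rw [h]; exact hMz.trans h, hz c⟩))
  -- M ≠ f, via the composition comp f H
  have hMf : M ≠ f := by
    intro hMf
    obtain ⟨t1, t2, t3, t4, t5⟩ := hcomp f H
    have hfc : ev f c = c := by rw [← hMf]; exact hMgen c hcf hcφ hcM
    by_cases e1 : comp f H = f
    · have h0 := t4 (by rw [e1]; exact Ne.symm hHf)
      rw [e1] at h0
      have h1 : ev M H = c := hMgen H hHf hHφ (Ne.symm hMH)
      rw [hMf] at h1
      rw [h1] at h0
      exact hc h0
    by_cases e2 : comp f H = H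
    · have h0 := t2 z (Ne.symm hfz) (Ne.symm q1) (by rw [e2]; exact Ne.symm q1)
      rw [e2, hHz, hcdef] at h0
      exact hc h0.symm
    · have h5 := t5 (fun h => e2 h.symm) (fun h => e1 h.symm) hHo hfo
      have hgen : ev H (comp f H) = c := hHgen _ e1 t1 e2
      rw [hgen, hfc] at h5
      rcases h5 with h5 | h5 <;> exact hc h5
  have hMf2 : ev M f = z := s3 hMf
  have hMc : ev M c = c := hMgen c hcf hcφ hcM
  have hMHc : ev M H = c := hMgen H hHf hHφ (Ne.symm hMH)
  have hHM : ev H M = c := hHgen M hMf s1 hMH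
  -- W := comp M z
  obtain ⟨u1, u2, u3, u4, u5⟩ := hcomp M z
  set W := comp M z with hWdef
  have hWz : ev W z = z := u4 u1
  have hWM : W ≠ M := fun h => hc (by rw [← hMz, ← h]; exact hWz)
  have hWM2 : ev W M = z := u3 hWM
  have hWgen : ∀ t, t ≠ M → t ≠ z → t ≠ W → ev W t = c := by
    intro t h1 h2 h3
    rw [u2 t h1 h2 h3, hz]; exact hMz
  have hWf : W ≠ f := fun h => hc (by rw [← hcdef, ← h]; exact hWz)
  have hWo : W ≠ o := fun h => s1 (by rw [← hWM2, h, ho])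
  have hWH : W ≠ H := fun h => hc (by rw [← hHM, ← h, hWM2])
  by_cases hcH : c = H
  · -- Case I : c = H.  Use the compositions comp M H and comp W H.
    obtain ⟨a1, a2, a3, a4, a5⟩ := hcomp M H
    by_cases e2 : comp M H = H
    · have h0 := a3 (by rw [e2]; exact Ne.symm hMH)
      rw [e2, hHM] at h0
      exact hc h0
    by_cases e3 : comp M H = M
    · have h0 := a4 (by rw [e3]; exact hMH)
      rw [e3, hMHc] at h0
      exact hc h0
    by_cases e1 : comp M H = f
    · have hfM2 := a3 (by rw [e1]; exact Ne.symm hMf)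
      rw [e1] at hfM2
      obtain ⟨b1, b2, b3, b4, b5⟩ := hcomp W H
      have hcW : c ≠ W := fun h => hWH (h.symm.trans hcH)
      have hWc2 : ev W c = c := hWgen c hcM hc hcW
      have hHWc : ev H W = c := hHgen W hWf u1 hWH
      have hWH2 : ev W H = c := by rw [← hcH]; exact hWc2
      by_cases e4 : comp W H = H
      · have h0 := b3 (by rw [e4]; exact Ne.symm hWH)
        rw [e4, hHWc] at h0
        exact hc h0
      by_cases e5 : comp W H = W
      · have h0 := b4 (by rw [e5]; exact hWH)
        rw [e5, hWH2] at h0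
        exact hc h0
      by_cases e6 : comp W H = f
      · have h0 := b2 M (fun h => hWM h.symm) hMH (by rw [e6]; exact hMf)
        rw [e6, hHM, hWc2, hfM2] at h0
        exact hc h0.symm
      · have h5 := b5 (fun h => e4 h.symm) (fun h => e5 h.symm) hHo hWo
        have hgen : ev H (comp W H) = c := hHgen _ e6 b1 e4
        rw [hgen, hWc2] at h5
        rcases h5 with h5 | h5 <;> exact hc h5
    · have h5 := a5 (fun h => e2 h.symm) (fun h => e3 h.symm) hHo hMo
      have hgen : ev H (comp M H) = c := hHgen _ e1 a1 e2
      rw [hgen, hMc] at h5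
      rcases h5 with h5 | h5 <;> exact hc h5
  · -- Case II : c ≠ H.  Use the composition comp c H.
    obtain ⟨d1, d2, d3, d4, d5⟩ := hcomp c H
    have hHc : ev H c = c := hHgen c hcf hc hcH
    by_cases e1 : comp c H = f
    · have h0 := d2 z (fun h => hc h.symm) (Ne.symm q1) (by rw [e1]; exact Ne.symm hfz)
      rw [e1, hHz, hcdef] at h0
      exact hc (hF1 c z (Or.inl ⟨h0.symm, hz c⟩))
    by_cases e2 : comp c H = H
    · have h0 := d3 (by rw [e2]; exact Ne.symm hcH)
      rw [e2, hHc] at h0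
      exact hc h0
    by_cases e3 : comp c H = c
    · -- Sub-case : comp c H = c.  Then c is almost constant with value c.
      have hcH2 : ev c H = z := by
        have h0 := d4 (by rw [e3]; exact hcH)
        rwa [e3] at h0
      have hcgen : ∀ t, t ≠ f → t ≠ z → t ≠ H → t ≠ c → ev c t = c := by
        intro t h1 h2 h3 h4
        have h0 := d2 t h4 h3 (by rw [e3]; exact h4)
        rw [e3, hHgen t h1 h2 h3, hF2] at h0
        exact h0
      have hcM2 : ev c M = c := hcgen M hMf s1 hMH (Ne.symm hcM)
      obtain ⟨g1, g2, g3, g4, g5⟩ := hcomp M c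
      by_cases e5 : comp M c = H
      · have h0 := g3 (by rw [e5]; exact Ne.symm hMH)
        rw [e5, hHM] at h0
        exact hc h0
      by_cases e6 : comp M c = M
      · have h0 := g4 (by rw [e6]; exact Ne.symm hcM)
        rw [e6, hMc] at h0
        exact hc h0
      by_cases e7 : comp M c = c
      · have h0 := g3 (by rw [e7]; exact hcM)
        rw [e7, hcM2] at h0
        exact hc h0
      by_cases e4 : comp M c = f
      · have hfM2 := g3 (by rw [e4]; exact Ne.symm hMf)
        rw [e4] at hfM2
        obtain ⟨k1, k2, k3, k4, k5⟩ := hcomp W c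
        have hcW : c ≠ W := fun h => hc (by rw [← hcM2, h, hWM2])
        have hWc2 : ev W c = c := hWgen c hcM hc hcW
        have hHWc : ev H W = c := hHgen W hWf u1 hWH
        have hcW2 : ev c W = c := hcgen W hWf u1 hWH (Ne.symm hcW)
        by_cases e8 : comp W c = f
        · have h0 := k2 M (fun h => hWM h.symm) (Ne.symm hcM) (by rw [e8]; exact hMf)
          rw [e8, hcM2, hWc2, hfM2] at h0
          exact hc h0.symm
        by_cases e9 : comp W c = H
        · have h0 := k3 (by rw [e9]; exact Ne.symm hWH)
          rw [e9, hHWc] at h0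
          exact hc h0
        by_cases e10 : comp W c = c
        · have h0 := k3 (by rw [e10]; exact hcW)
          rw [e10, hcW2] at h0
          exact hc h0
        by_cases e11 : comp W c = W
        · have h0 := k4 (by rw [e11]; exact Ne.symm hcW)
          rw [e11, hWc2] at h0
          exact hc h0
        · have h5 := k5 (fun h => e10 h.symm) (fun h => e11 h.symm) hco hWo
          have hgen : ev c (comp W c) = c := hcgen _ e8 k1 e9 e10
          rw [hgen, hWc2] at h5
          rcases h5 with h5 | h5 <;> exact hc h5
      · have h5 := g5 (fun h => e7 h.symm) (fun h => e6 h.symm) hco hMo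
        have hgen : ev c (comp M c) = c := hcgen _ e4 g1 e5 e7
        rw [hgen, hMc] at h5
        rcases h5 with h5 | h5 <;> exact hc h5
    · have h5 := d5 (fun h => e2 h.symm) (fun h => e3 h.symm) hHo hco
      have hgen : ev H (comp c H) = c := hHgen _ e1 d1 e2
      rw [hgen, hF2] at h5
      rcases h5 with h5 | h5 <;> exact hc h5
end

section
/- In a Flow structure with F-composition, for every x: (x ≠ 0̲ and x(1̲) = 0̲) if and only if (1̲ ∘ x = x and x ∘ 1̲ = x and x ≠ 1̲). -/
/-- For every x: (x ≠ 0̲ ∧ x(1̲) = 0̲) ↔ (1̲ ∘ x = x ∧ x ∘ 1̲ = x ∧ x ≠ 1̲). -/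
theorem flow_comp_with_one (F : Type*) (ev : F → F → F) (z o : F) (comp : F → F → F)
    (hne : z ≠ o)
    (hF1 : ∀ f g : F, ((ev f g = f ∧ ev g f = g) ∨ (ev f g = g ∧ ev g f = f)) → f = g)
    (hF2 : ∀ f : F, ev f f = f)
    (hz : ∀ x : F, ev z x = z)
    (ho : ∀ x : F, ev o x = x)
    (hcomp : ∀ f g : F, FlowComp ev z o f g (comp f g))
    (huniq : ∀ f g h : F, FlowComp ev z o f g h → h = comp f g) :
    ∀ x : F, (x ≠ z ∧ ev x o = z) ↔ (comp o x = x ∧ comp x o = x ∧ x ≠ o) := by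
  intro x
  constructor
  · rintro ⟨hxz, hxo⟩
    have hxo' : x ≠ o := fun h => hne ((h ▸ hxo).symm.trans (hF2 o))
    refine ⟨?_, ?_, hxo'⟩
    · exact (huniq o x x
        ⟨hxz, fun t _ _ _ => (ho (ev x t)).symm, fun _ => hxo,
         fun h => absurd rfl h, fun h => absurd rfl h⟩).symm
    · exact (huniq x o x
        ⟨hxz, fun t _ _ _ => by rw [ho t], fun h => absurd rfl h,
         fun _ => hxo, fun _ h => absurd rfl h⟩).symm
  · rintro ⟨h1, h2, hxo⟩
    have c1 := hcomp o x
    rw [h1] at c1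
    have c2 := hcomp x o
    rw [h2] at c2
    exact ⟨c1.1, c2.2.2.2.1 hxo⟩
end

section
/- In a Flow structure with F-composition, for no t ≠ 1̲ does there exist an element x with x(t) = 1̲ and x(1̲) = t. That is, there is no x that swaps some t ≠ 1̲ with 1̲. -/
/-- There is no x swapping some t ≠ 1̲ with 1̲. -/
theorem flow_no_swap_with_one (F : Type*) (ev : F → F → F) (z o : F) (comp : F → F → F)
    (hne : z ≠ o)
    (hF1 : ∀ f g : F, ((ev f g = f ∧ ev g f = g) ∨ (ev f g = g ∧ ev g f = f)) → f = g)
    (hF2 : ∀ f : F, ev f f = f)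
    (hz : ∀ x : F, ev z x = z)
    (ho : ∀ x : F, ev o x = x)
    (hcomp : ∀ f g : F, FlowComp ev z o f g (comp f g))
    (huniq : ∀ f g h : F, FlowComp ev z o f g h → h = comp f g) :
    ∀ t : F, t ≠ o → ¬ ∃ x : F, ev x t = o ∧ ev x o = t := by
  rintro t ht ⟨x, hxt, hxo⟩
  obtain ⟨hnz, hii, hiii, -, -⟩ := hcomp x x
  have hxz : x ≠ z := by
    intro e; apply hne; rw [e, hz] at hxt; exact hxt
  have hxno : x ≠ o := by
    intro e; apply ht; rw [e, ho] at hxt; exact hxt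
  have hho : comp x x = o := by
    by_cases hc : comp x x = o
    · exact hc
    · have h1 : ev (comp x x) o = o := by
        rw [hii o (Ne.symm hxno) (Ne.symm hxno) (fun e => hc e.symm), hxo, hxt]
      exact hF1 (comp x x) o (Or.inr ⟨h1, ho (comp x x)⟩)
  have hhx : comp x x ≠ x := by rw [hho]; exact fun e => hxno e.symm
  have h2 := hiii hhx
  rw [hho, ho] at h2
  exact hxz h2
end
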